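/- Let R be an n⁴ complex array obeying the quantum Yang–Baxter equation and η an invertible n×n matrix that is R-covariant. Then for every m ≥ 1 and all multi-indices, Σ_{b_1,…,b_m} ([m;R]!)^{a_1⋯a_m}_{b_1⋯b_m} η^{b_1 i_1} ⋯ η^{b_m i_m} = Σ_{b_1,…,b_m} η^{a_1 b_1} ⋯ η^{a_m b_m} ([m;R]!)^{i_m⋯i_1}_{b_m⋯b_1}. -/

import Mathlib

/-!
Let `s k` be `PR` acting in the tensor factors `k + 1, k + 2` of `(ℂⁿ)^{⊗m}` and let `R'` be the
transposed array `R'^i{}_j{}^k{}_l = R^j{}_i{}^l{}_k`. Covariance of `η` says exactly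
`PR (η ⊗ η) = (η ⊗ η) PR'`, hence `[m;R]! η^{⊗m} = η^{⊗m} [m;R']!`.

Transposing and reversing the order of the tensor factors is an anti-automorphism sending `s k`
for `R` to `s (m - 2 - k)` for `R'`. It maps `[m;R]!` to the product, in the opposite order, of the
braided integers whose chains end at the last factor instead of starting at the first. Since the
`s k` satisfy the braid relations (this is the QYBE) and far-apart ones commute, that product is
`[m;R']!` again. So `[m;R]! η^{⊗m}` equals `η^{⊗m}` times the reversed transpose of `[m;R]!`, whose
`(a, i)` entry is the claim.
-/

open scoped ComplexConjugate

noncomputable section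

/-- An n⁴ array `R^i{}_j{}^k{}_l` viewed as an n²×n² matrix with row index `(i,k)`,
column index `(j,l)`. -/
def toMat (n : ℕ) (R : Fin n → Fin n → Fin n → Fin n → ℂ) :
    Matrix (Fin n × Fin n) (Fin n × Fin n) ℂ :=
  Matrix.of fun p q => R p.1 q.1 p.2 q.2

/-- Entries `(R⁻¹)^i{}_j{}^k{}_l` of the matrix inverse of `R`. -/
def invEntry (n : ℕ) (R : Fin n → Fin n → Fin n → Fin n → ℂ)
    (i j k l : Fin n) : ℂ :=
  (toMat n R)⁻¹ (i, k) (j, l)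

/-- `R` is of real type I: `conj (R^i{}_j{}^k{}_l) = R^l{}_k{}^j{}_i`. -/
def RealTypeI (n : ℕ) (R : Fin n → Fin n → Fin n → Fin n → ℂ) : Prop :=
  ∀ i j k l, conj (R i j k l) = R l k j i

/-- `R` is of antireal type I: `R` invertible and
`conj (R^i{}_j{}^k{}_l) = (R⁻¹)^j{}_i{}^l{}_k`. -/
def AntirealTypeI (n : ℕ) (R : Fin n → Fin n → Fin n → Fin n → ℂ) : Prop :=
  IsUnit (toMat n R) ∧ ∀ i j k l, conj (R i j k l) = invEntry n R j i l k

/-- `R` is of real type II w.r.t. the involution `σ`: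
`conj (R^i{}_j{}^k{}_l) = R^{σk}{}_{σl}{}^{σi}{}_{σj}`. -/
def RealTypeII (n : ℕ) (R : Fin n → Fin n → Fin n → Fin n → ℂ)
    (σ : Fin n → Fin n) : Prop :=
  ∀ i j k l, conj (R i j k l) = R (σ k) (σ l) (σ i) (σ j)

/-- `R` is of antireal type II w.r.t. the involution `σ`: `R` invertible and
`conj (R^i{}_j{}^k{}_l) = (R⁻¹)^{σi}{}_{σj}{}^{σk}{}_{σl}`. -/
def AntirealTypeII (n : ℕ) (R : Fin n → Fin n → Fin n → Fin n → ℂ)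
    (σ : Fin n → Fin n) : Prop :=
  IsUnit (toMat n R) ∧
    ∀ i j k l, conj (R i j k l) = invEntry n R (σ i) (σ j) (σ k) (σ l)

/-- The metric `η` (entries `η^{ij} = η i j`) is `R`-covariant:
`Σ η^{ia} η^{jb} R^k{}_a{}^l{}_b = Σ R^i{}_a{}^j{}_b η^{ak} η^{bl}`. -/
def MetricCovariant (n : ℕ) (R : Fin n → Fin n → Fin n → Fin n → ℂ)
    (η : Matrix (Fin n) (Fin n) ℂ) : Prop :=
  ∀ i j k l, (∑ a : Fin n, ∑ b : Fin n, η i a * η j b * R k a l b) =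
    ∑ a : Fin n, ∑ b : Fin n, R i a j b * η a k * η b l

/-- The metric `η` is real: `conj (η^{ij}) = η_{ji}`, where the lower-index entries
`η_{ij}` are those of the transposed inverse, i.e. `η_{ji} = (η⁻¹) i j`. -/
def MetricReal (n : ℕ) (η : Matrix (Fin n) (Fin n) ℂ) : Prop :=
  ∀ i j, conj (η i j) = η⁻¹ i j

/-- The matrix `PR` on ℂⁿ⊗ℂⁿ: `(PR)^i{}_j{}^k{}_l = R^k{}_j{}^i{}_l`. -/
def PRmat (n : ℕ) (R : Fin n → Fin n → Fin n → Fin n → ℂ) :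
    Matrix (Fin n × Fin n) (Fin n × Fin n) ℂ :=
  Matrix.of fun p q => R p.2 q.1 p.1 q.2

/-- The matrix `A_{k+1,k+2}` on `(ℂⁿ)^{⊗m}` acting as the two-site matrix `A` in the
(0-indexed) tensor factors `k, k+1` and as the identity elsewhere (the identity
matrix if `k+1 ≥ m`). -/
def site (n m : ℕ) (A : Matrix (Fin n × Fin n) (Fin n × Fin n) ℂ) (k : ℕ) :
    Matrix (Fin m → Fin n) (Fin m → Fin n) ℂ :=
  if h : k + 1 < m then
    Matrix.of fun f g =>
      A (f ⟨k, Nat.lt_of_succ_lt h⟩, f ⟨k + 1, h⟩)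
        (g ⟨k, Nat.lt_of_succ_lt h⟩, g ⟨k + 1, h⟩) *
      ∏ t : Fin m,
        (if t.1 = k ∨ t.1 = k + 1 then (1 : ℂ) else if f t = g t then 1 else 0)
  else 1

/-- The ordered product `A_{off+1,off+2} A_{off+2,off+3} ⋯ A_{off+r,off+r+1}`
(1-indexed tensor positions) on `(ℂⁿ)^{⊗m}`; the identity for `r = 0`. -/
def chain (n m : ℕ) (A : Matrix (Fin n × Fin n) (Fin n × Fin n) ℂ)
    (off r : ℕ) : Matrix (Fin m → Fin n) (Fin m → Fin n) ℂ :=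
  ((List.range r).map fun s => site n m A (off + s)).prod

/-- The reversed ordered product `A_{off+r,off+r+1} ⋯ A_{off+2,off+3} A_{off+1,off+2}`
on `(ℂⁿ)^{⊗m}`; the identity for `r = 0`. -/
def chainOp (n m : ℕ) (A : Matrix (Fin n × Fin n) (Fin n × Fin n) ℂ)
    (off r : ℕ) : Matrix (Fin m → Fin n) (Fin m → Fin n) ℂ :=
  (((List.range r).reverse).map fun s => site n m A (off + s)).prod

/-- The braided integer `[k;R]` acting in the tensor factors `off+1,…,off+k`
(1-indexed) of `(ℂⁿ)^{⊗m}`: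
`[k;R] = Σ_{r=0}^{k−1} (PR)_{12}(PR)_{23}⋯(PR)_{r,r+1}` (shifted by `off`). -/
def braidedInt (n m : ℕ) (R : Fin n → Fin n → Fin n → Fin n → ℂ)
    (off k : ℕ) : Matrix (Fin m → Fin n) (Fin m → Fin n) ℂ :=
  ∑ r ∈ Finset.range k, chain n m (PRmat n R) off r

/-- The opposite braided integer `[k;R]^{op}` acting in the tensor factors
`off+1,…,off+k` of `(ℂⁿ)^{⊗m}`:
`[k;R]^{op} = Σ_{r=0}^{k−1} (PR)_{r,r+1}⋯(PR)_{23}(PR)_{12}` (shifted by `off`). -/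
def braidedIntOp (n m : ℕ) (R : Fin n → Fin n → Fin n → Fin n → ℂ)
    (off k : ℕ) : Matrix (Fin m → Fin n) (Fin m → Fin n) ℂ :=
  ∑ r ∈ Finset.range k, chainOp n m (PRmat n R) off r

/-- The braided factorial `[m;R]! = [2;R]_{m−1,m} [3;R]_{m−2,…,m} ⋯ [m;R]_{1,…,m}`
on `(ℂⁿ)^{⊗m}`. -/
def braidedFact (n m : ℕ) (R : Fin n → Fin n → Fin n → Fin n → ℂ) :
    Matrix (Fin m → Fin n) (Fin m → Fin n) ℂ :=
  ((List.range (m - 1)).map fun t => braidedInt n m R (m - (t + 2)) (t + 2)).prod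

/-- The opposite braided factorial
`[m;R]^{op}! = [m;R]^{op}_{1,…,m} ⋯ [3;R]^{op}_{m−2,…,m} [2;R]^{op}_{m−1,m}`. -/
def braidedFactOp (n m : ℕ) (R : Fin n → Fin n → Fin n → Fin n → ℂ) :
    Matrix (Fin m → Fin n) (Fin m → Fin n) ℂ :=
  (((List.range (m - 1)).reverse).map fun t =>
    braidedIntOp n m R (m - (t + 2)) (t + 2)).prod

/-- `R₁₂` on ℂⁿ⊗ℂⁿ⊗ℂⁿ. -/
def Rmat12 (n : ℕ) (R : Fin n → Fin n → Fin n → Fin n → ℂ) :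
    Matrix (Fin n × Fin n × Fin n) (Fin n × Fin n × Fin n) ℂ :=
  Matrix.of fun p q =>
    R p.1 q.1 p.2.1 q.2.1 * (if p.2.2 = q.2.2 then 1 else 0)

/-- `R₁₃` on ℂⁿ⊗ℂⁿ⊗ℂⁿ. -/
def Rmat13 (n : ℕ) (R : Fin n → Fin n → Fin n → Fin n → ℂ) :
    Matrix (Fin n × Fin n × Fin n) (Fin n × Fin n × Fin n) ℂ :=
  Matrix.of fun p q =>
    R p.1 q.1 p.2.2 q.2.2 * (if p.2.1 = q.2.1 then 1 else 0)

/-- `R₂₃` on ℂⁿ⊗ℂⁿ⊗ℂⁿ. -/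
def Rmat23 (n : ℕ) (R : Fin n → Fin n → Fin n → Fin n → ℂ) :
    Matrix (Fin n × Fin n × Fin n) (Fin n × Fin n × Fin n) ℂ :=
  Matrix.of fun p q =>
    (if p.1 = q.1 then (1 : ℂ) else 0) * R p.2.1 q.2.1 p.2.2 q.2.2

/-- The quantum Yang–Baxter equation `R₁₂R₁₃R₂₃ = R₂₃R₁₃R₁₂`. -/
def QYBE (n : ℕ) (R : Fin n → Fin n → Fin n → Fin n → ℂ) : Prop :=
  Rmat12 n R * Rmat13 n R * Rmat23 n R = Rmat23 n R * Rmat13 n R * Rmat12 n R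

/-- The array `R₂₁`, with `R₂₁^i{}_j{}^k{}_l = R^k{}_l{}^i{}_j`. -/
def swapR (n : ℕ) (R : Fin n → Fin n → Fin n → Fin n → ℂ) :
    Fin n → Fin n → Fin n → Fin n → ℂ :=
  fun i j k l => R k l i j

open scoped Matrix Kronecker

section BraidAlgebra

variable {M : Type*} [Semiring M]

structure BraidRelations (s : ℕ → M) (N : ℕ) : Prop where
  commute : ∀ k l, k + 2 ≤ l → Commute (s k) (s l)
  braid : ∀ k, k + 2 < N → s k * s (k + 1) * s k = s (k + 1) * s k * s (k + 1)

def consecProd (s : ℕ → M) (off r : ℕ) : M :=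
  ((List.range r).map fun i => s (off + i)).prod

def braidSum (s : ℕ → M) (off k : ℕ) : M :=
  ∑ r ∈ Finset.range k, consecProd s off r

/-- `∑_{r < k} s (off + k - 1 - r) ⋯ s (off + k - 2)`: the chains of `braidSum s off k` anchored
at the right end of the window instead of the left. -/
def braidSumRev (s : ℕ → M) : ℕ → ℕ → M
  | _, 0 => 0
  | off, k + 1 => braidSumRev s (off + 1) k + consecProd s off k

/-- The braided factorial `[k]!` built from `s off, …, s (off + k - 2)`; for `s = (PR)_{·,·+1}`
it acts on the tensor factors `off + 1, …, off + k`. -/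
def braidFactorial (s : ℕ → M) : ℕ → ℕ → M
  | _, 0 => 1
  | off, k + 1 => braidFactorial s (off + 1) k * braidSum s off (k + 1)

variable (s : ℕ → M)

@[simp]
lemma consecProd_zero (off : ℕ) : consecProd s off 0 = 1 := rfl

lemma consecProd_succ (off r : ℕ) :
    consecProd s off (r + 1) = consecProd s off r * s (off + r) := by
  simp [consecProd, List.range_succ]

lemma consecProd_succ' (off r : ℕ) :
    consecProd s off (r + 1) = s off * consecProd s (off + 1) r := by
  simp only [consecProd, List.range_succ_eq_map, List.map_cons, List.prod_cons, List.map_map]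
  congr 2
  ext i
  simp [Nat.add_right_comm, Nat.add_assoc]

lemma consecProd_add (off r l : ℕ) :
    consecProd s off (r + l) = consecProd s off r * consecProd s (off + r) l := by
  induction l with
  | zero => simp
  | succ l ih =>
    rw [← Nat.add_assoc, consecProd_succ, ih, consecProd_succ, mul_assoc, Nat.add_assoc]

lemma commute_consecProd {x : M} {off r : ℕ} (h : ∀ i < r, Commute x (s (off + i))) :
    Commute x (consecProd s off r) :=
  Commute.list_prod_right _ _ fun y hy => by
    obtain ⟨i, hi, rfl⟩ := List.mem_map.mp hy
    exact h i (List.mem_range.mp hi)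

lemma braidSum_succ (off k : ℕ) :
    braidSum s off (k + 1) = braidSum s off k + consecProd s off k :=
  Finset.sum_range_succ _ _

@[simp]
lemma braidSum_one (off : ℕ) : braidSum s off 1 = 1 := by
  simp [braidSum]

@[simp]
lemma braidSumRev_zero (off : ℕ) : braidSumRev s off 0 = 0 := rfl

lemma braidSumRev_succ (off k : ℕ) :
    braidSumRev s off (k + 1) = braidSumRev s (off + 1) k + consecProd s off k := rfl

@[simp]
lemma braidFactorial_zero (off : ℕ) : braidFactorial s off 0 = 1 := rfl

lemma braidFactorial_succ (off k : ℕ) :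
    braidFactorial s off (k + 1) = braidFactorial s (off + 1) k * braidSum s off (k + 1) := rfl

namespace BraidRelations

variable {s} {N : ℕ} (hs : BraidRelations s N)
include hs

lemma mul_consecProd {off l p : ℕ} (hp : off ≤ p) (hpl : p + 2 ≤ off + l) (hl : off + l < N) :
    s (p + 1) * consecProd s off l = consecProd s off l * s p := by
  obtain ⟨c, rfl⟩ := Nat.exists_eq_add_of_le hp
  obtain ⟨d, rfl⟩ : ∃ d, l = c + 2 + d := ⟨l - c - 2, by omega⟩
  have hsplit : consecProd s off (c + 2 + d) =
      consecProd s off c * (s (off + c) * (s (off + c + 1) * consecProd s (off + c + 2) d)) := by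
    rw [consecProd_add, consecProd_add s off c 2, consecProd_succ', consecProd_succ',
      consecProd_zero, mul_one]
    simp only [mul_assoc, Nat.add_assoc]
  have hleft : Commute (s (off + c + 1)) (consecProd s off c) :=
    commute_consecProd s fun i hi => (hs.commute _ _ (by omega)).symm
  have hright : Commute (s (off + c)) (consecProd s (off + c + 2) d) :=
    commute_consecProd s fun i _ => hs.commute _ _ (by omega)
  have hbraid := hs.braid (off + c) (by omega)
  rw [hsplit, ← mul_assoc, hleft.eq]
  simp only [mul_assoc]
  rw [← mul_assoc (s (off + c + 1)), ← mul_assoc (s (off + c + 1) * s (off + c)), ← hbraid,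
    mul_assoc, mul_assoc, hright.eq]

lemma consecProd_mul_consecProd {off l q r : ℕ} (hq : off ≤ q) (hqr : q + r + 1 ≤ off + l)
    (hl : off + l < N) :
    consecProd s (q + 1) r * consecProd s off l = consecProd s off l * consecProd s q r := by
  induction r with
  | zero => simp
  | succ r ih =>
    rw [consecProd_succ, consecProd_succ, mul_assoc, Nat.add_right_comm,
      hs.mul_consecProd (by omega) (by omega) hl, ← mul_assoc, ih (by omega), mul_assoc]

lemma braidSum_mul_consecProd {off l q k : ℕ} (hq : off ≤ q) (hqk : q + k ≤ off + l)
    (hl : off + l < N) :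
    braidSum s (q + 1) k * consecProd s off l = consecProd s off l * braidSum s q k := by
  rw [braidSum, braidSum, Finset.sum_mul, Finset.mul_sum]
  exact Finset.sum_congr rfl fun r hr =>
    hs.consecProd_mul_consecProd hq (by simp at hr; omega) hl

lemma braidFactorial_mul_consecProd {off l : ℕ} (hl : off + l < N) (j : ℕ) :
    ∀ q, off ≤ q → q + j ≤ off + l →
      braidFactorial s (q + 1) j * consecProd s off l =
        consecProd s off l * braidFactorial s q j := by
  induction j with
  | zero => simp
  | succ j ih =>
    intro q hq hqj
    rw [braidFactorial_succ, braidFactorial_succ, mul_assoc, hs.braidSum_mul_consecProd hq hqj hl,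
      ← mul_assoc, ih (q + 1) (by omega) (by omega), mul_assoc]

lemma braidFactorial_succ_eq_braidSumRev_mul (j : ℕ) :
    ∀ off, off + j + 1 ≤ N →
      braidFactorial s off (j + 1) = braidSumRev s off (j + 1) * braidFactorial s off j := by
  induction j with
  | zero => simp [braidFactorial_succ, braidSumRev_succ]
  | succ j ih =>
    intro off hoff
    rw [braidFactorial_succ, braidSum_succ, mul_add,
      hs.braidFactorial_mul_consecProd (by omega) (j + 1) off le_rfl le_rfl,
      ih (off + 1) (by omega), mul_assoc, ← braidFactorial_succ,
      braidSumRev_succ s off (j + 1), add_mul]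

end BraidRelations

lemma braidFactorial_succ_eq_prod (j : ℕ) : ∀ off,
    braidFactorial s off (j + 1) =
      ((List.range j).map fun t => braidSum s (off + j - (t + 1)) (t + 2)).prod := by
  induction j with
  | zero => simp [braidFactorial_succ]
  | succ j ih =>
    intro off
    rw [braidFactorial_succ, ih, List.range_succ, List.map_append, List.prod_append]
    simp [Nat.add_right_comm, Nat.add_assoc]

lemma braidFactorial_eq_prod (m : ℕ) :
    braidFactorial s 0 m =
      ((List.range (m - 1)).map fun t => braidSum s (m - (t + 2)) (t + 2)).prod := by
  cases m with
  | zero => rfl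
  | succ j =>
    rw [braidFactorial_succ_eq_prod, Nat.add_sub_cancel]
    refine congrArg List.prod (List.map_congr_left fun t _ => ?_)
    congr 1
    omega

section Intertwining

variable {s} {t : ℕ → M} {e : M} (h : ∀ k, s k * e = e * t k)
include h

lemma consecProd_mul_of_mul_eq (off r : ℕ) :
    consecProd s off r * e = e * consecProd t off r := by
  induction r with
  | zero => simp
  | succ r ih => rw [consecProd_succ, consecProd_succ, mul_assoc, h, ← mul_assoc, ih, mul_assoc]

lemma braidSum_mul_of_mul_eq (off k : ℕ) : braidSum s off k * e = e * braidSum t off k := by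
  rw [braidSum, braidSum, Finset.sum_mul, Finset.mul_sum]
  exact Finset.sum_congr rfl fun r _ => consecProd_mul_of_mul_eq h off r

lemma braidFactorial_mul_of_mul_eq (k : ℕ) :
    ∀ off, braidFactorial s off k * e = e * braidFactorial t off k := by
  induction k with
  | zero => simp
  | succ k ih =>
    intro off
    rw [braidFactorial_succ, braidFactorial_succ, mul_assoc, braidSum_mul_of_mul_eq h,
      ← mul_assoc, ih, mul_assoc]

end Intertwining

section AntiHom

variable {s} {t : ℕ → M} {N : ℕ} (φ : M →+* Mᵐᵒᵖ)
  (hφ : ∀ k, k + 1 < N → (φ (s k)).unop = t (N - 2 - k))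
include hφ

lemma unop_map_consecProd (off r : ℕ) (h : off + r < N) :
    (φ (consecProd s off r)).unop = consecProd t (N - 1 - off - r) r := by
  induction r with
  | zero => simp
  | succ r ih =>
    rw [consecProd_succ, map_mul, MulOpposite.unop_mul, ih (by omega), hφ _ (by omega),
      show N - 1 - off - r = N - 2 - (off + r) + 1 by omega, ← consecProd_succ']
    congr 1
    omega

lemma unop_map_braidSum (off k : ℕ) (h : off + k ≤ N) :
    (φ (braidSum s off k)).unop = braidSumRev t (N - off - k) k := by
  induction k with
  | zero => simp [braidSum]
  | succ k ih =>
    rw [braidSum_succ, map_add, MulOpposite.unop_add, ih (by omega),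
      unop_map_consecProd φ hφ off k (by omega), braidSumRev_succ,
      show N - off - (k + 1) + 1 = N - off - k by omega,
      show N - 1 - off - k = N - off - (k + 1) by omega]

lemma unop_map_braidFactorial (ht : BraidRelations t N) (k : ℕ) :
    ∀ off, off + k ≤ N →
      (φ (braidFactorial s off k)).unop = braidFactorial t (N - off - k) k := by
  induction k with
  | zero => simp
  | succ k ih =>
    intro off h
    rw [braidFactorial_succ, map_mul, MulOpposite.unop_mul, unop_map_braidSum φ hφ off _ h,
      ih (off + 1) (by omega), show N - (off + 1) - k = N - off - (k + 1) by omega,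
      ht.braidFactorial_succ_eq_braidSumRev_mul k _ (by omega)]

end AntiHom

end BraidAlgebra

section Site

variable {n m : ℕ}

def setPair (k : ℕ) (hk : k + 1 < m) (f : Fin m → Fin n) (p : Fin n × Fin n) : Fin m → Fin n :=
  Function.update (Function.update f ⟨k, by omega⟩ p.1) ⟨k + 1, hk⟩ p.2

lemma setPair_apply (k : ℕ) (hk : k + 1 < m) (f : Fin m → Fin n) (p : Fin n × Fin n)
    (t : Fin m) :
    setPair k hk f p t = if (t : ℕ) = k then p.1 else if (t : ℕ) = k + 1 then p.2 else f t := by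
  simp only [setPair, Function.update_apply, Fin.ext_iff]
  split_ifs <;> omega

@[simp]
lemma setPair_apply_left (k : ℕ) (hk : k + 1 < m) (f : Fin m → Fin n) (p : Fin n × Fin n)
    (h : k < m) : setPair k hk f p ⟨k, h⟩ = p.1 := by
  simp [setPair_apply]

@[simp]
lemma setPair_apply_right (k : ℕ) (hk : k + 1 < m) (f : Fin m → Fin n) (p : Fin n × Fin n)
    (h : k + 1 < m) : setPair k hk f p ⟨k + 1, h⟩ = p.2 := by
  simp [setPair_apply]

lemma setPair_apply_of_ne (k : ℕ) (hk : k + 1 < m) (f : Fin m → Fin n) (p : Fin n × Fin n)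
    {t : Fin m} (h₁ : (t : ℕ) ≠ k) (h₂ : (t : ℕ) ≠ k + 1) : setPair k hk f p t = f t := by
  simp [setPair_apply, h₁, h₂]

lemma setPair_eq_of_forall_ne (k : ℕ) (hk : k + 1 < m) {f g : Fin m → Fin n}
    (h : ∀ t : Fin m, (t : ℕ) ≠ k → (t : ℕ) ≠ k + 1 → f t = g t) :
    setPair k hk f (g ⟨k, by omega⟩, g ⟨k + 1, hk⟩) = g := by
  funext t
  rw [setPair_apply]
  split_ifs with h₁ h₂
  · exact congrArg g (Fin.ext h₁.symm)
  · exact congrArg g (Fin.ext h₂.symm)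
  · exact h t h₁ h₂

lemma setPair_comm {k l : ℕ} (hk : k + 1 < m) (hl : l + 1 < m) (hkl : k + 2 ≤ l)
    (f : Fin m → Fin n) (p q : Fin n × Fin n) :
    setPair k hk (setPair l hl f q) p = setPair l hl (setPair k hk f p) q := by
  funext t
  simp only [setPair_apply]
  split_ifs <;> first | rfl | omega

lemma site_apply (A : Matrix (Fin n × Fin n) (Fin n × Fin n) ℂ) (k : ℕ) (hk : k + 1 < m)
    (f g : Fin m → Fin n) :
    site n m A k f g = A (f ⟨k, by omega⟩, f ⟨k + 1, hk⟩) (g ⟨k, by omega⟩, g ⟨k + 1, hk⟩) *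
      if ∀ t : Fin m, (t : ℕ) ≠ k → (t : ℕ) ≠ k + 1 → f t = g t then 1 else 0 := by
  simp only [site, dif_pos hk, Matrix.of_apply]
  congr 1
  trans ∏ t : Fin m, if (t : ℕ) ≠ k → (t : ℕ) ≠ k + 1 → f t = g t then (1 : ℂ) else 0
  · refine Finset.prod_congr rfl fun t _ => ?_
    by_cases h₁ : (t : ℕ) = k <;> by_cases h₂ : (t : ℕ) = k + 1 <;> simp [h₁, h₂]
  · rw [Fintype.prod_boole]
    congr

lemma site_of_le (A : Matrix (Fin n × Fin n) (Fin n × Fin n) ℂ) {k : ℕ} (hk : m ≤ k + 1) :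
    site n m A k = 1 := by
  rw [site, dif_neg (by omega)]

lemma sum_setPair (k : ℕ) (hk : k + 1 < m) (f : Fin m → Fin n) (F : (Fin m → Fin n) → ℂ) :
    (∑ g, if ∀ t : Fin m, (t : ℕ) ≠ k → (t : ℕ) ≠ k + 1 → f t = g t then F g else 0) =
      ∑ p, F (setPair k hk f p) := by
  rw [← Finset.sum_filter]
  refine Finset.sum_nbij' (fun g => (g ⟨k, by omega⟩, g ⟨k + 1, hk⟩)) (setPair k hk f)
    (by simp) ?_ ?_ (by simp) ?_
  · intro p _
    exact Finset.mem_filter.mpr ⟨Finset.mem_univ _,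
      fun t h₁ h₂ => (setPair_apply_of_ne _ _ _ _ h₁ h₂).symm⟩
  · intro g hg
    exact setPair_eq_of_forall_ne k hk (Finset.mem_filter.mp hg).2
  · intro g hg
    rw [setPair_eq_of_forall_ne k hk (Finset.mem_filter.mp hg).2]

lemma site_mul_apply (A : Matrix (Fin n × Fin n) (Fin n × Fin n) ℂ) (k : ℕ) (hk : k + 1 < m)
    (M : Matrix (Fin m → Fin n) (Fin m → Fin n) ℂ) (f g : Fin m → Fin n) :
    (site n m A k * M) f g =
      ∑ p, A (f ⟨k, by omega⟩, f ⟨k + 1, hk⟩) p * M (setPair k hk f p) g := by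
  simp only [Matrix.mul_apply, site_apply A k hk, mul_ite, ite_mul, mul_one, mul_zero, zero_mul]
  rw [sum_setPair k hk f]
  simp

lemma site_transpose (A : Matrix (Fin n × Fin n) (Fin n × Fin n) ℂ) (k : ℕ) :
    (site n m A k)ᵀ = site n m Aᵀ k := by
  by_cases hk : k + 1 < m
  · ext f g
    simp only [Matrix.transpose_apply, site_apply _ k hk, eq_comm]
  · rw [site_of_le _ (by omega), site_of_le _ (by omega), Matrix.transpose_one]

lemma mul_site_apply (A : Matrix (Fin n × Fin n) (Fin n × Fin n) ℂ) (k : ℕ) (hk : k + 1 < m)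
    (M : Matrix (Fin m → Fin n) (Fin m → Fin n) ℂ) (f g : Fin m → Fin n) :
    (M * site n m A k) f g =
      ∑ p, M f (setPair k hk g p) * A p (g ⟨k, by omega⟩, g ⟨k + 1, hk⟩) := by
  rw [← Matrix.transpose_apply (M * _), Matrix.transpose_mul, site_transpose,
    site_mul_apply _ k hk]
  simp [mul_comm]

lemma commute_site (A B : Matrix (Fin n × Fin n) (Fin n × Fin n) ℂ) {k l : ℕ}
    (hkl : k + 2 ≤ l) : Commute (site n m A k) (site n m B l) := by
  by_cases hl : l + 1 < m
  · have hk : k + 1 < m := by omega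
    have hA : ∀ (f : Fin m → Fin n) q,
        (setPair l hl f q ⟨k, by omega⟩, setPair l hl f q ⟨k + 1, hk⟩) =
          (f ⟨k, by omega⟩, f ⟨k + 1, hk⟩) := fun f q => by
      simp [setPair_apply, show k ≠ l by omega, show k ≠ l + 1 by omega, show k + 1 ≠ l by omega]
    have hB : ∀ (f : Fin m → Fin n) p,
        (setPair k hk f p ⟨l, by omega⟩, setPair k hk f p ⟨l + 1, hl⟩) =
          (f ⟨l, by omega⟩, f ⟨l + 1, hl⟩) := fun f p => by
      simp [setPair_apply, show l ≠ k by omega, show l ≠ k + 1 by omega, show l + 1 ≠ k by omega]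
    suffices h : ∀ M, site n m A k * (site n m B l * M) = site n m B l * (site n m A k * M) by
      have h1 := h 1
      rw [mul_one, mul_one] at h1
      exact h1
    intro M
    ext f g
    simp only [site_mul_apply _ _ hk, site_mul_apply _ _ hl, Finset.mul_sum, hA, hB]
    rw [Finset.sum_comm]
    refine Finset.sum_congr rfl fun p _ => Finset.sum_congr rfl fun q _ => ?_
    rw [setPair_comm hk hl hkl]
    ring
  · rw [site_of_le B (k := l) (by omega)]
    exact Commute.one_right _

end Site

section Braid

variable {n m : ℕ}

lemma QYBE.braid_entry {R : Fin n → Fin n → Fin n → Fin n → ℂ} (hR : QYBE n R)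
    (a b c u v w : Fin n) :
    ∑ x, ∑ y, ∑ z, R b x a z * R c y z w * R y u x v =
      ∑ x, ∑ y, ∑ z, R c z b y * R z u a x * R y v x w := by
  have h := congrFun (congrFun hR (c, b, a)) (u, v, w)
  simp only [Matrix.mul_apply, Rmat12, Rmat13, Rmat23, Matrix.of_apply,
    Fintype.sum_prod_type, ite_mul, mul_ite, zero_mul, mul_zero, one_mul,
    mul_one, Finset.sum_ite_irrel, Finset.sum_const_zero, Finset.sum_mul,
    Finset.sum_ite_eq, Finset.sum_ite_eq', Finset.mem_univ,
    if_true] at h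
  exact Finset.sum_comm.trans (h.symm.trans Finset.sum_comm)

lemma site_succ_apply_setPair (A : Matrix (Fin n × Fin n) (Fin n × Fin n) ℂ) (k : ℕ)
    (hk : k + 2 < m) (f g : Fin m → Fin n) (p q : Fin n × Fin n) :
    site n m A (k + 1) (setPair k (by omega) f p) (setPair k (by omega) g q) =
      if p.1 = q.1 then A (p.2, f ⟨k + 2, hk⟩) (q.2, g ⟨k + 2, hk⟩) *
        (if ∀ t : Fin m, (t : ℕ) ≠ k → (t : ℕ) ≠ k + 1 → (t : ℕ) ≠ k + 2 → f t = g t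
          then 1 else 0)
      else 0 := by
  have hiff : (∀ t : Fin m, (t : ℕ) ≠ k + 1 → (t : ℕ) ≠ k + 2 →
        setPair k (by omega) f p t = setPair k (by omega) g q t) ↔
      p.1 = q.1 ∧ ∀ t : Fin m, (t : ℕ) ≠ k → (t : ℕ) ≠ k + 1 → (t : ℕ) ≠ k + 2 → f t = g t := by
    constructor
    · intro h
      refine ⟨?_, fun t h₀ h₁ h₂ => ?_⟩
      · have hk' := h ⟨k, by omega⟩ (by simp) (by simp)
        rwa [setPair_apply_left, setPair_apply_left] at hk'
      simpa [setPair_apply, h₀, h₁] using h t h₁ h₂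
    · rintro ⟨h₀, h⟩ t h₁ h₂
      simp only [setPair_apply, if_neg h₁]
      split_ifs
      exacts [h₀, h t ‹_› h₁ h₂]
  rw [site_apply A (k + 1) hk, if_congr hiff rfl rfl]
  by_cases h₀ : p.1 = q.1 <;> simp [h₀, setPair_apply, show k + 1 + 1 ≠ k by omega]

lemma site_apply_setPair_succ (A : Matrix (Fin n × Fin n) (Fin n × Fin n) ℂ) (k : ℕ)
    (hk : k + 2 < m) (f g : Fin m → Fin n) (p q : Fin n × Fin n) :
    site n m A k (setPair (k + 1) hk f p) (setPair (k + 1) hk g q) =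
      if p.2 = q.2 then A (f ⟨k, by omega⟩, p.1) (g ⟨k, by omega⟩, q.1) *
        (if ∀ t : Fin m, (t : ℕ) ≠ k → (t : ℕ) ≠ k + 1 → (t : ℕ) ≠ k + 2 → f t = g t
          then 1 else 0)
      else 0 := by
  have hiff : (∀ t : Fin m, (t : ℕ) ≠ k → (t : ℕ) ≠ k + 1 →
        setPair (k + 1) hk f p t = setPair (k + 1) hk g q t) ↔
      p.2 = q.2 ∧ ∀ t : Fin m, (t : ℕ) ≠ k → (t : ℕ) ≠ k + 1 → (t : ℕ) ≠ k + 2 → f t = g t := by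
    constructor
    · intro h
      refine ⟨?_, fun t h₀ h₁ h₂ => ?_⟩
      · have hk' := h ⟨k + 1 + 1, hk⟩ (by simp; omega) (by simp)
        rwa [setPair_apply_right, setPair_apply_right] at hk'
      simpa [setPair_apply, h₁, h₂] using h t h₀ h₁
    · rintro ⟨h₀, h⟩ t h₁ h₂
      simp only [setPair_apply, if_neg h₂]
      split_ifs
      exacts [h₀, h t h₁ h₂ ‹_›]
  rw [site_apply A k (by omega), if_congr hiff rfl rfl]
  by_cases h₀ : p.2 = q.2 <;> simp [h₀, setPair_apply, show k ≠ k + 1 + 1 by omega]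

lemma QYBE.site_braid {R : Fin n → Fin n → Fin n → Fin n → ℂ} (hR : QYBE n R) (k : ℕ)
    (hk : k + 2 < m) :
    site n m (PRmat n R) k * site n m (PRmat n R) (k + 1) * site n m (PRmat n R) k =
      site n m (PRmat n R) (k + 1) * site n m (PRmat n R) k * site n m (PRmat n R) (k + 1) := by
  have hk₁ : k + 1 < m := by omega
  ext f g
  rw [mul_site_apply _ k hk₁, mul_site_apply _ (k + 1) hk]
  simp only [site_mul_apply _ k hk₁, site_mul_apply _ (k + 1) hk,
    site_succ_apply_setPair _ k hk, site_apply_setPair_succ _ k hk]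
  by_cases hD : ∀ t : Fin m, (t : ℕ) ≠ k → (t : ℕ) ≠ k + 1 → (t : ℕ) ≠ k + 2 → f t = g t
  · simp only [if_pos hD, mul_one, Fintype.sum_prod_type, PRmat, Matrix.of_apply, Finset.sum_mul,
      mul_ite, mul_zero, Finset.sum_ite_irrel, Finset.sum_const_zero, Finset.sum_ite_eq',
      Finset.mem_univ, if_true]
    exact hR.braid_entry _ _ _ _ _ _
  · simp [hD]

lemma QYBE.braidRelations_site {R : Fin n → Fin n → Fin n → Fin n → ℂ} (hR : QYBE n R) :
    BraidRelations (site n m (PRmat n R)) m :=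
  ⟨fun _ _ h => commute_site _ _ h, hR.site_braid⟩

end Braid

section Covariance

variable {n m : ℕ}

def tensorPow (η : Matrix (Fin n) (Fin n) ℂ) (m : ℕ) : Matrix (Fin m → Fin n) (Fin m → Fin n) ℂ :=
  Matrix.of fun f g => ∏ t, η (f t) (g t)

lemma prod_setPair (k : ℕ) (hk : k + 1 < m) (f : Fin m → Fin n) (p : Fin n × Fin n)
    (G : Fin m → Fin n → ℂ) :
    ∏ t, G t (setPair k hk f p t) =
      G ⟨k, by omega⟩ p.1 * G ⟨k + 1, hk⟩ p.2 *
        ∏ t ∈ (Finset.univ.erase ⟨k, by omega⟩).erase ⟨k + 1, hk⟩, G t (f t) := by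
  rw [← Finset.mul_prod_erase _ _ (Finset.mem_univ ⟨k, by omega⟩),
    ← Finset.mul_prod_erase _ _ (Finset.mem_erase.mpr ⟨by simp, Finset.mem_univ ⟨k + 1, hk⟩⟩),
    setPair_apply_left, setPair_apply_right, mul_assoc]
  congr 2
  refine Finset.prod_congr rfl fun t ht => ?_
  simp only [Finset.mem_erase, ne_eq, Fin.ext_iff] at ht
  rw [setPair_apply_of_ne _ _ _ _ ht.2.1 ht.1]

lemma site_mul_tensorPow {A B : Matrix (Fin n × Fin n) (Fin n × Fin n) ℂ}
    {η : Matrix (Fin n) (Fin n) ℂ} (h : A * (η ⊗ₖ η) = (η ⊗ₖ η) * B) (k : ℕ) :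
    site n m A k * tensorPow η m = tensorPow η m * site n m B k := by
  by_cases hk : k + 1 < m
  · ext f g
    rw [site_mul_apply _ k hk, mul_site_apply _ k hk]
    simp only [tensorPow, Matrix.of_apply, prod_setPair k hk _ _ (fun t x => η x (g t)),
      prod_setPair k hk _ _ (fun t x => η (f t) x)]
    set P := ∏ t ∈ (Finset.univ.erase ⟨k, by omega⟩).erase ⟨k + 1, hk⟩, η (f t) (g t)
    have hfg := congrArg (· * P)
      (congrFun (congrFun h (f ⟨k, by omega⟩, f ⟨k + 1, hk⟩)) (g ⟨k, by omega⟩, g ⟨k + 1, hk⟩))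
    simp only [Matrix.mul_apply, Matrix.kroneckerMap_apply, Finset.sum_mul] at hfg
    convert hfg using 2 <;> ring
  · rw [site_of_le _ (by omega), site_of_le _ (by omega), one_mul, mul_one]

end Covariance

section Reversal

variable {n m : ℕ}

def reverse (n m : ℕ) : (Fin m → Fin n) ≃ (Fin m → Fin n) where
  toFun f := f ∘ Fin.rev
  invFun f := f ∘ Fin.rev
  left_inv f := by ext; simp
  right_inv f := by ext; simp

@[simp]
lemma reverse_apply (f : Fin m → Fin n) (t : Fin m) : reverse n m f t = f t.rev := rfl

def revTranspose : Matrix (Fin m → Fin n) (Fin m → Fin n) ℂ →+*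
    (Matrix (Fin m → Fin n) (Fin m → Fin n) ℂ)ᵐᵒᵖ where
  toFun M := MulOpposite.op (Mᵀ.submatrix (reverse n m) (reverse n m))
  map_one' := by simp
  map_mul' M N := by
    rw [Matrix.transpose_mul, ← Matrix.submatrix_mul_equiv _ _ _ (reverse n m)]
    rfl
  map_zero' := by simp
  map_add' M N := by simp [Matrix.submatrix_add]

lemma site_transpose_submatrix_reverse (A : Matrix (Fin n × Fin n) (Fin n × Fin n) ℂ) (k : ℕ)
    (hk : k + 1 < m) :
    (site n m A k)ᵀ.submatrix (reverse n m) (reverse n m) =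
      site n m (Aᵀ.submatrix Prod.swap Prod.swap) (m - 2 - k) := by
  have hrev₀ : Fin.rev (⟨k, by omega⟩ : Fin m) = ⟨m - 2 - k + 1, by omega⟩ := by
    ext; simp only [Fin.val_rev]; omega
  have hrev₁ : Fin.rev (⟨k + 1, hk⟩ : Fin m) = ⟨m - 2 - k, by omega⟩ := by
    ext; simp only [Fin.val_rev]; omega
  ext f g
  simp only [Matrix.submatrix_apply, Matrix.transpose_apply]
  rw [site_apply A k hk, site_apply _ (m - 2 - k) (by omega)]
  simp only [reverse_apply, hrev₀, hrev₁, Matrix.submatrix_apply, Matrix.transpose_apply,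
    Prod.swap_prod_mk]
  congr 2
  have hval : ∀ t : Fin m, (t.rev : ℕ) = m - 1 - t := fun t => by
    have := t.isLt
    simp only [Fin.val_rev]
    omega
  refine propext ⟨fun h t h₁ h₂ => ?_, fun h t h₁ h₂ => ?_⟩
  · have ht := t.isLt
    simpa using (h t.rev (by rw [hval]; omega) (by rw [hval]; omega)).symm
  · have ht := t.isLt
    exact (h t.rev (by rw [hval]; omega) (by rw [hval]; omega)).symm

end Reversal

section TransposeR

variable {n : ℕ}

def transposeR (n : ℕ) (R : Fin n → Fin n → Fin n → Fin n → ℂ) :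
    Fin n → Fin n → Fin n → Fin n → ℂ :=
  fun i j k l => R j i l k

lemma PRmat_transposeR (R : Fin n → Fin n → Fin n → Fin n → ℂ) :
    PRmat n (transposeR n R) = (PRmat n R)ᵀ.submatrix Prod.swap Prod.swap :=
  rfl

lemma QYBE.transposeR {R : Fin n → Fin n → Fin n → Fin n → ℂ} (hR : QYBE n R) :
    QYBE n (transposeR n R) := by
  have h12 : Rmat12 n (_root_.transposeR n R) = (Rmat12 n R)ᵀ := by
    ext p q; simp [Rmat12, _root_.transposeR, eq_comm]
  have h13 : Rmat13 n (_root_.transposeR n R) = (Rmat13 n R)ᵀ := by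
    ext p q; simp [Rmat13, _root_.transposeR, eq_comm]
  have h23 : Rmat23 n (_root_.transposeR n R) = (Rmat23 n R)ᵀ := by
    ext p q; simp [Rmat23, _root_.transposeR, eq_comm]
  rw [QYBE, h12, h13, h23, ← Matrix.transpose_mul, ← Matrix.transpose_mul,
    ← Matrix.transpose_mul, ← Matrix.transpose_mul, ← mul_assoc, ← mul_assoc, hR]

lemma MetricCovariant.PRmat_mul_kronecker {R : Fin n → Fin n → Fin n → Fin n → ℂ}
    {η : Matrix (Fin n) (Fin n) ℂ}
    (hcov : MetricCovariant n R η) :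
    PRmat n R * (η ⊗ₖ η) = (η ⊗ₖ η) * PRmat n (transposeR n R) := by
  ext ⟨i, j⟩ ⟨u, v⟩
  simp only [Matrix.mul_apply, Fintype.sum_prod_type, Matrix.kroneckerMap_apply, PRmat,
    transposeR, Matrix.of_apply]
  rw [Finset.sum_comm (f := fun x y => η i x * η j y * R u y v x)]
  calc _ = ∑ a, ∑ b, R j a i b * η a u * η b v :=
        Finset.sum_congr rfl fun _ _ => Finset.sum_congr rfl fun _ _ => by ring
    _ = ∑ a, ∑ b, η j a * η i b * R u a v b := (hcov j i u v).symm
    _ = _ := Finset.sum_congr rfl fun _ _ => Finset.sum_congr rfl fun _ _ => by ring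

end TransposeR

section BraidedFactorial

variable {n m : ℕ}

lemma braidedFact_eq_braidFactorial (R : Fin n → Fin n → Fin n → Fin n → ℂ) :
    braidedFact n m R = braidFactorial (site n m (PRmat n R)) 0 m :=
  (braidFactorial_eq_prod _ m).symm

lemma braidedFact_mul_tensorPow {R : Fin n → Fin n → Fin n → Fin n → ℂ}
    {η : Matrix (Fin n) (Fin n) ℂ} (hcov : MetricCovariant n R η) :
    braidedFact n m R * tensorPow η m = tensorPow η m * braidedFact n m (transposeR n R) := by
  rw [braidedFact_eq_braidFactorial, braidedFact_eq_braidFactorial]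
  exact braidFactorial_mul_of_mul_eq (site_mul_tensorPow hcov.PRmat_mul_kronecker) m 0

lemma revTranspose_braidedFact {R : Fin n → Fin n → Fin n → Fin n → ℂ} (hR : QYBE n R) :
    (revTranspose (braidedFact n m R)).unop = braidedFact n m (transposeR n R) := by
  have hsite : ∀ k, k + 1 < m → (revTranspose (site n m (PRmat n R) k)).unop =
      site n m (PRmat n (transposeR n R)) (m - 2 - k) := fun k hk => by
    rw [PRmat_transposeR]
    exact site_transpose_submatrix_reverse _ k hk
  rw [braidedFact_eq_braidFactorial, braidedFact_eq_braidFactorial,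
    unop_map_braidFactorial revTranspose hsite
      hR.transposeR.braidRelations_site m 0 (by simp)]
  simp

end BraidedFactorial

theorem stmt15_general (n : ℕ)
    (R : Fin n → Fin n → Fin n → Fin n → ℂ) (hR : QYBE n R)
    (η : Matrix (Fin n) (Fin n) ℂ)
    (hcov : MetricCovariant n R η)
    (m : ℕ) (a i : Fin m → Fin n) :
    (∑ b : Fin m → Fin n,
      braidedFact n m R a b * ∏ t : Fin m, η (b t) (i t)) =
    ∑ b : Fin m → Fin n,
      (∏ t : Fin m, η (a t) (b t)) *
        braidedFact n m R (fun t => i t.rev) (fun t => b t.rev) := by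
  have h := congrFun (congrFun (braidedFact_mul_tensorPow (m := m) hcov) a) i
  rw [← revTranspose_braidedFact hR] at h
  -- the two sides of `h` unfold definitionally to those of the goal
  exact h

/-- if `R` obeys the QYBE and `η` is invertible and `R`-covariant,
then for every `m ≥ 1`,
`Σ_b ([m;R]!)^{a}_{b} η^{b_1 i_1}⋯η^{b_m i_m}
 = Σ_b η^{a_1 b_1}⋯η^{a_m b_m} ([m;R]!)^{i_m⋯i_1}_{b_m⋯b_1}`. -/
theorem stmt15 (n : ℕ) (hn : 1 ≤ n)
    (R : Fin n → Fin n → Fin n → Fin n → ℂ) (hR : QYBE n R)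
    (η : Matrix (Fin n) (Fin n) ℂ) (hη : IsUnit η)
    (hcov : MetricCovariant n R η)
    (m : ℕ) (hm : 1 ≤ m) (a i : Fin m → Fin n) :
    (∑ b : Fin m → Fin n,
      braidedFact n m R a b * ∏ t : Fin m, η (b t) (i t)) =
    ∑ b : Fin m → Fin n,
      (∏ t : Fin m, η (a t) (b t)) *
        braidedFact n m R (fun t => i t.rev) (fun t => b t.rev) :=
  stmt15_general n R hR η hcov m a i
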